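/- arXiv:2412.06497 — 2 statements merged into one kernel-verified Lean document; each statement's English description precedes it below -/
import Mathlib

section
/- Fix an integer k ≥ 2 and r₀ > 0, and set r = √(r₀/(2·log₂ e)); assume r ≤ 1 and let N = ⌊1/r⌋. Then for any two distinct probability vectors P, Q ∈ Γ_{r,k} (coordinates integer multiples of 1/N), the Kullback–Leibler divergence in bits satisfies D(P‖Q) ≥ r₀. -/
/-!
Pinsker's inequality `‖P - Q‖₁² / 2 ≤ D(P‖Q)` (in nats) bounds the divergence from below by the
squared ℓ¹ distance. Two distinct points of the grid `(1/N)ℤᵏ` with equal coordinate sums differ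
by at least `1/N` in some coordinate, and since the differences sum to zero their ℓ¹ distance is
at least `2/N ≥ 2r`. Hence `D(P‖Q) ≥ 2r² = r₀ log 2` nats, i.e. at least `r₀` bits.

Pinsker's inequality itself follows from the pointwise bound `klFun t ≥ 3(t-1)²/(2(t+2))` and
Cauchy–Schwarz with the weights `P i + 2 Q i`.
-/

open scoped Classical

noncomputable def klBits {k : ℕ} (P Q : Fin k → ℝ) : EReal :=
  if ∃ i, 0 < P i ∧ Q i = 0 then ⊤
  else ((∑ i, if P i = 0 then 0 else P i * Real.logb 2 (P i / Q i) : ℝ) : EReal)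

open Real Set Finset InformationTheory

theorem isMinOn_of_hasDerivAt_sign_change {f f' : ℝ → ℝ} {a c : ℝ} (hac : a ≤ c)
    (hf : ContinuousOn f (Ici a)) (hderiv : ∀ x, a < x → HasDerivAt f (f' x) x)
    (hleft : ∀ x, a < x → x < c → f' x ≤ 0) (hright : ∀ x, c < x → 0 ≤ f' x) :
    IsMinOn f (Ici a) c := by
  intro t (hat : a ≤ t)
  rcases le_total t c with htc | hct
  · refine antitoneOn_of_deriv_nonpos (convex_Icc a c) (hf.mono Icc_subset_Ici_self) ?_ ?_
      ⟨hat, htc⟩ ⟨hac, le_rfl⟩ htc <;> rw [interior_Icc]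
    · exact fun x hx => (hderiv x hx.1).differentiableAt.differentiableWithinAt
    · exact fun x hx => (hderiv x hx.1).deriv ▸ hleft x hx.1 hx.2
  · refine monotoneOn_of_deriv_nonneg (convex_Ici c) (hf.mono (Ici_subset_Ici.2 hac)) ?_ ?_
      self_mem_Ici hct hct <;> rw [interior_Ici]
    · exact fun x hx => (hderiv x (hac.trans_lt hx)).differentiableAt.differentiableWithinAt
    · exact fun x hx => (hderiv x (hac.trans_lt hx)).deriv ▸ hright x hx

namespace Real

lemma monotoneOn_add_one_mul_log_sub_two_mul :
    MonotoneOn (fun x => (x + 1) * log x - 2 * (x - 1)) (Ioi 0) := by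
  have hderiv : ∀ x, 0 < x →
      HasDerivAt (fun x => (x + 1) * log x - 2 * (x - 1)) (log x + x⁻¹ - 1) x := by
    intro x hx
    refine ((((hasDerivAt_id x).add_const 1).mul (hasDerivAt_log hx.ne')).sub
      (((hasDerivAt_id x).sub_const 1).const_mul 2)).congr_deriv ?_
    simp only [id]
    field_simp
    ring
  refine monotoneOn_of_deriv_nonneg (convex_Ioi 0)
    (fun x hx => (hderiv x hx).continuousAt.continuousWithinAt) ?_ ?_ <;> rw [interior_Ioi]
  · exact fun x hx => (hderiv x hx).differentiableAt.differentiableWithinAt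
  · intro x hx
    rw [(hderiv x hx).deriv]
    linarith [one_sub_inv_le_log_of_pos hx]

end Real

namespace InformationTheory

lemma three_mul_sq_div_le_klFun {t : ℝ} (ht : 0 ≤ t) :
    3 * (t - 1) ^ 2 / (2 * (t + 2)) ≤ klFun t := by
  set F : ℝ → ℝ := fun x => 2 * (x + 2) * klFun x - 3 * (x - 1) ^ 2
  set G : ℝ → ℝ := fun x => (x + 1) * log x - 2 * (x - 1)
  have hF : ∀ x, 0 < x → HasDerivAt F (4 * G x) x := by
    intro x hx
    refine ((((hasDerivAt_id x).add_const 2).const_mul 2).mul (hasDerivAt_klFun hx.ne') |>.sub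
      ((((hasDerivAt_id x).sub_const 1).pow 2).const_mul 3)).congr_deriv ?_
    simp only [G, klFun_apply, id]
    ring
  -- `F' = 4G` changes sign at `1` because `G` is increasing with `G 1 = 0`.
  have hmin : IsMinOn F (Ici 0) 1 := by
    refine isMinOn_of_hasDerivAt_sign_change zero_le_one (by fun_prop) hF
      (fun x hx hx1 => ?_) (fun x hx => ?_)
    · have := monotoneOn_add_one_mul_log_sub_two_mul hx (mem_Ioi.2 one_pos) hx1.le
      norm_num at this
      linarith
    · have := monotoneOn_add_one_mul_log_sub_two_mul (mem_Ioi.2 one_pos) (one_pos.trans hx) hx.le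
      norm_num at this
      linarith
  have hF1 : F 1 = 0 := by simp [F, klFun_one]
  have hFt : 0 ≤ F t := hF1 ▸ hmin (mem_Ici.2 ht)
  rw [div_le_iff₀ (by positivity)]
  linarith

lemma three_mul_sq_div_le_mul_klFun {p q : ℝ} (hp : 0 ≤ p) (hq : 0 ≤ q) (hpq : q = 0 → p = 0) :
    3 * (p - q) ^ 2 / (2 * (p + 2 * q)) ≤ q * klFun (p / q) := by
  rcases hq.eq_or_lt with rfl | hq
  · simp [hpq rfl]
  calc 3 * (p - q) ^ 2 / (2 * (p + 2 * q)) = q * (3 * (p / q - 1) ^ 2 / (2 * (p / q + 2))) := by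
        field_simp
    _ ≤ q * klFun (p / q) := by gcongr; exact three_mul_sq_div_le_klFun (by positivity)

lemma mul_klFun_div_eq {p q : ℝ} (hpq : q = 0 → p = 0) :
    q * klFun (p / q) = (if p = 0 then 0 else p * log (p / q)) + q - p := by
  rcases eq_or_ne q 0 with rfl | hq
  · simp [hpq rfl]
  split_ifs with hp
  · simp [hp, klFun_zero]
  · rw [klFun_apply]
    field_simp

/-- **Pinsker's inequality** for finitely supported distributions, with the divergence in nats. -/
theorem sq_sum_abs_sub_div_two_le_sum_mul_klFun {ι : Type*} [Fintype ι] {P Q : ι → ℝ}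
    (hP : P ∈ stdSimplex ℝ ι) (hQ : Q ∈ stdSimplex ℝ ι) (hPQ : ∀ i, Q i = 0 → P i = 0) :
    (∑ i, |P i - Q i|) ^ 2 / 2 ≤ ∑ i, Q i * klFun (P i / Q i) := by
  have hsum : ∑ i, 2 / 3 * (P i + 2 * Q i) = 2 := by
    rw [← mul_sum, sum_add_distrib, ← mul_sum, hP.2, hQ.2]
    norm_num
  have hCS : (∑ i, |P i - Q i|) ^ 2 ≤ 2 * ∑ i, 3 * (P i - Q i) ^ 2 / (2 * (P i + 2 * Q i)) := by
    refine (sum_sq_le_sum_mul_sum_of_sq_le_mul _ (f := fun i => 2 / 3 * (P i + 2 * Q i))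
      (g := fun i => 3 * (P i - Q i) ^ 2 / (2 * (P i + 2 * Q i))) (fun i _ => ?_) (fun i _ => ?_) (fun i _ => ?_)).trans_eq (by rw [hsum])
    · linarith [hP.1 i, hQ.1 i]
    · have := hP.1 i; have := hQ.1 i; positivity
    rcases (add_nonneg (hP.1 i) (mul_nonneg zero_le_two (hQ.1 i))).eq_or_lt with h | h
    · obtain ⟨hPi, hQi⟩ : P i = 0 ∧ Q i = 0 := by constructor <;> linarith [hP.1 i, hQ.1 i]
      simp [hPi, hQi]
    · have : P i + Q i * 2 ≠ 0 := by linarith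
      rw [sq_abs]
      exact le_of_eq (by field_simp)
  have hpt := sum_le_sum fun i (_ : i ∈ Finset.univ) =>
    three_mul_sq_div_le_mul_klFun (hP.1 i) (hQ.1 i) (hPQ i)
  linarith

end InformationTheory

lemma two_mul_abs_le_sum_abs_of_sum_eq_zero {ι : Type*} [DecidableEq ι] {s : Finset ι}
    {x : ι → ℝ} (hx : ∑ j ∈ s, x j = 0) {i : ι} (hi : i ∈ s) : 2 * |x i| ≤ ∑ j ∈ s, |x j| := by
  rw [← add_sum_erase s _ hi] at hx ⊢
  have hrest : |x i| = |∑ j ∈ s.erase i, x j| := by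
    rw [eq_neg_of_add_eq_zero_left hx, abs_neg]
  linarith [abs_sum_le_sum_abs x (s.erase i)]

lemma one_div_le_abs_sub_of_mem_grid {N : ℕ} {x y : ℝ} (hx : ∃ a : ℕ, x = a / N)
    (hy : ∃ b : ℕ, y = b / N) (hxy : x ≠ y) : 1 / N ≤ |x - y| := by
  obtain ⟨a, rfl⟩ := hx
  obtain ⟨b, rfl⟩ := hy
  have hab : (a : ℤ) - b ≠ 0 := sub_ne_zero.2 fun h => hxy (by rw [Int.natCast_inj.1 h])
  have h1 : (1 : ℝ) ≤ |(a : ℝ) - b| := by exact_mod_cast Int.one_le_abs hab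
  rw [div_sub_div_same, abs_div, Nat.abs_cast]
  exact div_le_div_of_nonneg_right h1 (Nat.cast_nonneg N)

lemma two_div_le_sum_abs_sub_of_mem_grid {ι : Type*} [Fintype ι] {N : ℕ} {P Q : ι → ℝ}
    (hsum : ∑ i, P i = ∑ i, Q i) (hPgrid : ∀ i, ∃ a : ℕ, P i = a / N)
    (hQgrid : ∀ i, ∃ a : ℕ, Q i = a / N) (hne : P ≠ Q) : 2 / N ≤ ∑ i, |P i - Q i| := by
  obtain ⟨i, hi⟩ := Function.ne_iff.1 hne
  have hgap := one_div_le_abs_sub_of_mem_grid (hPgrid i) (hQgrid i) hi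
  have hzero : ∑ j, (P j - Q j) = 0 := by rw [sum_sub_distrib, hsum, sub_self]
  have := two_mul_abs_le_sum_abs_of_sum_eq_zero hzero (mem_univ i)
  rw [← mul_one_div]
  linarith

lemma le_one_div_floor_one_div {r : ℝ} (hr : r ≤ 1) : r ≤ 1 / ⌊1 / r⌋₊ := by
  rcases le_or_gt r 0 with hr0 | hr0
  · exact hr0.trans (by positivity)
  have hN : 0 < (⌊1 / r⌋₊ : ℝ) := by
    exact_mod_cast Nat.floor_pos.2 (by rw [le_div_iff₀ hr0]; linarith)
  rw [le_div_iff₀ hN, mul_comm, ← le_div_iff₀ hr0]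
  exact Nat.floor_le (by positivity)

lemma klBits_eq_sum_mul_klFun_div_log_two {k : ℕ} {P Q : Fin k → ℝ} (hsum : ∑ i, P i = ∑ i, Q i)
    (hPQ : ∀ i, Q i = 0 → P i = 0) :
    klBits P Q = (((∑ i, Q i * klFun (P i / Q i)) / log 2 : ℝ) : EReal) := by
  have hfin : ¬ ∃ i, 0 < P i ∧ Q i = 0 := fun ⟨i, hPi, hQi⟩ => hPi.ne' (hPQ i hQi)
  rw [klBits, if_neg hfin]
  congr 1
  simp only [mul_klFun_div_eq (hPQ _), sum_sub_distrib, sum_add_distrib, hsum, add_sub_cancel_right]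
  rw [sum_div]
  refine sum_congr rfl fun i _ => ?_
  split_ifs <;> simp [logb, mul_div_assoc]

theorem kl_packing_of_grid_general (k : ℕ) (r₀ : ℝ)
    (r : ℝ) (hr : r = Real.sqrt (r₀ / (2 * Real.logb 2 (Real.exp 1))))
    (hr1 : r ≤ 1)
    (N : ℕ) (hN : N = ⌊1 / r⌋₊)
    (P Q : Fin k → ℝ)
    (hPnn : ∀ i, 0 ≤ P i) (hPsum : ∑ i, P i = 1)
    (hQnn : ∀ i, 0 ≤ Q i) (hQsum : ∑ i, Q i = 1)
    (hPgrid : ∀ i, ∃ a : ℕ, P i = (a : ℝ) / N)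
    (hQgrid : ∀ i, ∃ a : ℕ, Q i = (a : ℝ) / N)
    (hne : P ≠ Q) :
    (r₀ : EReal) ≤ klBits P Q := by
  by_cases hPQ : ∀ i, Q i = 0 → P i = 0
  swap
  · simp only [not_forall] at hPQ
    obtain ⟨i, hQi, hPi⟩ := hPQ
    rw [klBits, if_pos ⟨i, (hPnn i).lt_of_ne' hPi, hQi⟩]
    exact le_top
  rw [klBits_eq_sum_mul_klFun_div_log_two (hPsum.trans hQsum.symm) hPQ, EReal.coe_le_coe_iff,
    le_div_iff₀ (log_pos one_lt_two)]
  have hr₀ : r₀ * log 2 ≤ 2 * r ^ 2 := by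
    have hlogb : logb 2 (exp 1) = 1 / log 2 := by rw [logb, log_exp]
    rcases le_total 0 r₀ with h | h
    · rw [hr, sq_sqrt (by rw [hlogb]; positivity), hlogb]
      exact le_of_eq (by field_simp)
    · exact (mul_nonpos_of_nonpos_of_nonneg h (log_pos one_lt_two).le).trans (by positivity)
  have hrN : r ^ 2 ≤ (1 / N) ^ 2 :=
    pow_le_pow_left₀ (hr ▸ sqrt_nonneg _) (hN ▸ le_one_div_floor_one_div hr1) 2
  have hTV := two_div_le_sum_abs_sub_of_mem_grid (hPsum.trans hQsum.symm) hPgrid hQgrid hne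
  calc r₀ * log 2 ≤ (2 / N) ^ 2 / 2 := by linarith [show (2 / N : ℝ) ^ 2 / 2 = 2 * (1 / N) ^ 2 by ring]
    _ ≤ (∑ i, |P i - Q i|) ^ 2 / 2 := by gcongr
    _ ≤ ∑ i, Q i * klFun (P i / Q i) :=
      sq_sum_abs_sub_div_two_le_sum_mul_klFun ⟨hPnn, hPsum⟩ ⟨hQnn, hQsum⟩ hPQ

/-- For `r = √(r₀/(2·log₂ e))` with `r ≤ 1` and `N = ⌊1/r⌋`, any two
distinct probability vectors on `Fin k` with all coordinates integer multiples of
`1/N` satisfy `D(P‖Q) ≥ r₀` (KL divergence in bits). -/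
theorem kl_packing_of_grid (k : ℕ) (hk : 2 ≤ k) (r₀ : ℝ) (hr₀ : 0 < r₀)
    (r : ℝ) (hr : r = Real.sqrt (r₀ / (2 * Real.logb 2 (Real.exp 1))))
    (hr1 : r ≤ 1)
    (N : ℕ) (hN : N = ⌊1 / r⌋₊)
    (P Q : Fin k → ℝ)
    (hPnn : ∀ i, 0 ≤ P i) (hPsum : ∑ i, P i = 1)
    (hQnn : ∀ i, 0 ≤ Q i) (hQsum : ∑ i, Q i = 1)
    (hPgrid : ∀ i, ∃ a : ℕ, P i = (a : ℝ) / N)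
    (hQgrid : ∀ i, ∃ a : ℕ, Q i = (a : ℝ) / N)
    (hne : P ≠ Q) :
    (r₀ : EReal) ≤ klBits P Q :=
  kl_packing_of_grid_general k r₀ r hr hr1 N hN P Q hPnn hPsum hQnn hQsum hPgrid hQgrid hne
end

section
/- Fix δ ∈ (0, 1/2), r₀ > 0, set r = (1/(1−2δ))·√(r₀/(2·log₂ e)), assume r ≤ 1, let N = ⌊1/r⌋ and M = N + 1, and define δ_m = δ + (1−2δ)·(m−1)/N for m = 1,…,M (so δ = δ₁ < δ₂ < … < δ_M = 1−δ). Then for every n ≥ 1 there exists a decoder g : {0,1}^n → {1,…,M} such that (1/M)·∑_{m=1}^M ℙ_{Y ∼ Bern(δ_m)^{⊗n}}[ g(Y) ≠ m ] ≤ (1/M)·∑_{m=1}^M min{ 1, A_m + B_m }, where A_m = ∑_{t=0}^{T_m} C(n,t)·δ_m^t·(1−δ_m)^{n−t} for m ≥ 2 with T_m = ⌊ n·log₂((1−δ_{m−1})/(1−δ_m)) / log₂(δ_m(1−δ_{m−1})/(δ_{m−1}(1−δ_m))) ⌋ and A₁ = 0, and B_m = ∑_{t=S_m}^{n} C(n,t)·δ_m^t·(1−δ_m)^{n−t}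 for m ≤ M−1 with S_m = ⌈ n·log₂((1−δ_{m+1})/(1−δ_m)) / log₂(δ_m(1−δ_{m+1})/(δ_{m+1}(1−δ_m))) ⌉ and B_M = 0. -/
/-!
Decode by counting ones. The count `t` is sufficient, and the likelihood ratio of
`Bern(q)^⊗n` to `Bern(p)^⊗n` (`p < q`) is increasing in `t`, crossing `1` at `n · τ(p, q)` with
`τ(p, q) ∈ [p, q]` by Gibbs' inequality. The decoder returns how many of the thresholds
`n · τ(δ_j, δ_{j+1})` the count reaches; as these thresholds increase with `j`, message `m` is
missed only if the count is at most the threshold to its left or at least the one to its right,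
and the union bound over the two binomial tails gives `A_m + B_m`.
-/

/-- Probability of the event `E ⊆ (Fin k)^n` under the `n`-fold product measure whose
coordinates are i.i.d. with common distribution `P` on `Fin k`. -/
noncomputable def prodProb {k : ℕ} (P : Fin k → ℝ) (n : ℕ) (E : Set (Fin n → Fin k)) : ℝ :=
  ∑ y : Fin n → Fin k, E.indicator (fun y => ∏ i, P (y i)) y

open Finset Real

section ProdProb

variable {k n : ℕ} {P : Fin k → ℝ}

lemma prodProb_univ : prodProb P n Set.univ = (∑ a, P a) ^ n := by
  rw [prodProb, Set.indicator_univ, ← Fintype.prod_sum (fun (_ : Fin n) a => P a)]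
  simp

lemma prodProb_mono (hP : 0 ≤ P) {E F : Set (Fin n → Fin k)} (h : E ⊆ F) :
    prodProb P n E ≤ prodProb P n F :=
  sum_le_sum fun y _ =>
    Set.indicator_le_indicator_of_subset h (fun _ => prod_nonneg fun _ _ => hP _) y

lemma prodProb_le_one (hP : 0 ≤ P) (hP1 : ∑ a, P a = 1) (E : Set (Fin n → Fin k)) :
    prodProb P n E ≤ 1 := by
  simpa [prodProb_univ, hP1] using prodProb_mono hP (Set.subset_univ E)

lemma prodProb_union_le (hP : 0 ≤ P) (E F : Set (Fin n → Fin k)) :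
    prodProb P n (E ∪ F) ≤ prodProb P n E + prodProb P n F := by
  rw [prodProb, prodProb, prodProb, ← sum_add_distrib]
  refine sum_le_sum fun y _ => ?_
  rw [← Set.indicator_union_add_inter_apply]
  exact le_add_of_nonneg_right
    (Set.indicator_nonneg (fun z _ => prod_nonneg fun i _ => hP (z i)) y)

lemma prodProb_setOf_and (c : Prop) [Decidable c] (E : Set (Fin n → Fin k)) :
    prodProb P n {y | c ∧ y ∈ E} = if c then prodProb P n E else 0 := by
  split_ifs with hc <;> simp [prodProb, hc]

end ProdProb

section Bernoulli

variable {n : ℕ}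

lemma bernoulli_nonneg {p : ℝ} (hp0 : 0 ≤ p) (hp1 : p ≤ 1) : 0 ≤ ![1 - p, p] := by
  intro a
  fin_cases a <;> simp [hp0, hp1]

lemma bernoulli_sum (p : ℝ) : ∑ a, ![1 - p, p] a = 1 := by
  simp

def numOnes (y : Fin n → Fin 2) : ℕ := #{i | y i = 1}

def finTwoFunEquivFinset : (Fin n → Fin 2) ≃ Finset (Fin n) where
  toFun y := {i | y i = 1}
  invFun s i := if i ∈ s then 1 else 0
  left_inv y := by
    funext i
    by_cases h : y i = 1
    · simp [h]
    · simp [show y i = 0 by omega]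
  right_inv s := by ext i; by_cases h : i ∈ s <;> simp [h]

lemma prod_bernoulli_finTwoFunEquivFinset_symm (p : ℝ) (s : Finset (Fin n)) :
    ∏ i, ![1 - p, p] (finTwoFunEquivFinset.symm s i) = p ^ #s * (1 - p) ^ (n - #s) := by
  have : ∀ i, ![1 - p, p] (finTwoFunEquivFinset.symm s i) = if i ∈ s then p else 1 - p := by
    intro i; by_cases h : i ∈ s <;> simp [finTwoFunEquivFinset, h]
  simp only [this, prod_ite, prod_const, filter_mem_eq_inter, univ_inter, filter_not,
    ← compl_eq_univ_sdiff, card_compl, Fintype.card_fin]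

lemma prodProb_bernoulli_setOf_numOnes (p : ℝ) (Q : ℕ → Prop) [DecidablePred Q] :
    prodProb ![1 - p, p] n {y | Q (numOnes y)} =
      ∑ t ∈ range (n + 1) with Q t, (n.choose t : ℝ) * p ^ t * (1 - p) ^ (n - t) := by
  have hcard (s : Finset (Fin n)) : numOnes (finTwoFunEquivFinset.symm s) = #s :=
    congrArg card (finTwoFunEquivFinset.apply_symm_apply s)
  rw [prodProb, ← finTwoFunEquivFinset.symm.sum_comp]
  simp only [Set.indicator_apply, Set.mem_ofPred_eq, hcard,
    prod_bernoulli_finTwoFunEquivFinset_symm]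
  rw [← powerset_univ,
    sum_powerset_apply_card (fun t => if Q t then p ^ t * (1 - p) ^ (n - t) else 0), card_univ,
    Fintype.card_fin, sum_filter]
  refine sum_congr rfl fun t _ => ?_
  split_ifs <;> simp [mul_assoc]

lemma prodProb_bernoulli_numOnes_le (p : ℝ) (k : ℕ) :
    prodProb ![1 - p, p] n {y | numOnes y ≤ k} =
      ∑ t ∈ range (k + 1), (n.choose t : ℝ) * p ^ t * (1 - p) ^ (n - t) := by
  rw [prodProb_bernoulli_setOf_numOnes p (· ≤ k)]
  refine sum_subset (fun t ht => ?_) (fun t ht hnot => ?_)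
  · simp only [mem_filter, mem_range] at ht ⊢
    omega
  · have hnt : n < t := by simp only [mem_filter, mem_range] at ht hnot; omega
    simp [Nat.choose_eq_zero_of_lt hnt]

lemma prodProb_bernoulli_le_numOnes (p : ℝ) (k : ℕ) :
    prodProb ![1 - p, p] n {y | k ≤ numOnes y} =
      ∑ t ∈ Icc k n, (n.choose t : ℝ) * p ^ t * (1 - p) ^ (n - t) := by
  rw [prodProb_bernoulli_setOf_numOnes p (k ≤ ·)]
  congr 1
  ext t
  simp only [mem_filter, mem_range, mem_Icc]
  omega

end Bernoulli

-- `t = n · llrThreshold p q` solves `p ^ t * (1 - p) ^ (n - t) = q ^ t * (1 - q) ^ (n - t)`.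
noncomputable def llrThreshold (p q : ℝ) : ℝ :=
  logb 2 ((1 - p) / (1 - q)) / logb 2 (q * (1 - p) / (p * (1 - q)))

lemma llrThreshold_comm (p q : ℝ) : llrThreshold q p = llrThreshold p q := by
  rw [llrThreshold, llrThreshold, ← inv_div (1 - p), ← inv_div (q * (1 - p)), logb_inv, logb_inv,
    neg_div_neg_eq]

lemma mul_log_sub_add_mul_log_sub_nonpos {p q : ℝ} (hp0 : 0 < p) (hp1 : p < 1) (hq0 : 0 < q)
    (hq1 : q < 1) : p * (log q - log p) + (1 - p) * (log (1 - q) - log (1 - p)) ≤ 0 := by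
  have h1p : 0 < 1 - p := by linarith
  have h1q : 0 < 1 - q := by linarith
  calc p * (log q - log p) + (1 - p) * (log (1 - q) - log (1 - p))
      = p * log (q / p) + (1 - p) * log ((1 - q) / (1 - p)) := by
        rw [log_div hq0.ne' hp0.ne', log_div h1q.ne' h1p.ne']
    _ ≤ p * (q / p - 1) + (1 - p) * ((1 - q) / (1 - p) - 1) := by
        gcongr
        · exact log_le_sub_one_of_pos (by positivity)
        · exact log_le_sub_one_of_pos (by positivity)
    _ = 0 := by field_simp; ring

lemma llrThreshold_mem_Icc {p q : ℝ} (hp : 0 < p) (hpq : p < q) (hq : q < 1) :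
    llrThreshold p q ∈ Set.Icc p q := by
  have hq0 : 0 < q := hp.trans hpq
  have h1p : 0 < 1 - p := by linarith
  have h1q : 0 < 1 - q := by linarith
  have hlog : llrThreshold p q =
      (log (1 - p) - log (1 - q)) / ((log q - log p) + (log (1 - p) - log (1 - q))) := by
    rw [llrThreshold, logb, logb, div_div_div_cancel_right₀ (log_pos one_lt_two).ne',
      log_div h1p.ne' h1q.ne', mul_div_mul_comm, log_mul (by positivity) (by positivity),
      log_div hq0.ne' hp.ne', log_div h1p.ne' h1q.ne']
  have hX : log p < log q := log_lt_log hp hpq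
  have hY : log (1 - q) < log (1 - p) := log_lt_log h1q (by linarith)
  have gpq := mul_log_sub_add_mul_log_sub_nonpos hp (by linarith) hq0 hq
  have gqp := mul_log_sub_add_mul_log_sub_nonpos hq0 hq hp (by linarith)
  rw [hlog, Set.mem_Icc, le_div_iff₀ (by linarith), div_le_iff₀ (by linarith)]
  constructor <;> linarith

section Decoder

variable {α : Type*}

lemma lt_card_filter_le_iff [Preorder α] [DecidableRel (α := α) (· ≤ ·)] {τ : ℕ → α} {N : ℕ}
    (hτ : MonotoneOn τ (Set.Iio N)) (x : α) (m : ℕ) :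
    m < #{j ∈ range N | τ j ≤ x} ↔ m < N ∧ τ m ≤ x := by
  constructor
  · intro hm
    by_contra h
    have hsub : {j ∈ range N | τ j ≤ x} ⊆ range m := by
      intro j hj
      rw [mem_filter, mem_range] at hj
      rw [mem_range]
      by_contra hjm
      exact h ⟨by omega, (hτ (by simp; omega) (by simpa using hj.1) (by omega)).trans hj.2⟩
    simpa using hm.trans_le (card_le_card hsub)
  · rintro ⟨hmN, hmx⟩
    have hsub : range (m + 1) ⊆ {j ∈ range N | τ j ≤ x} := by
      intro j hj
      rw [mem_range] at hj
      rw [mem_filter, mem_range]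
      exact ⟨by omega, (hτ (by simp; omega) (by simpa using hmN) (by omega)).trans hmx⟩
    simpa using card_le_card hsub

def thresholdIndex [Preorder α] [DecidableRel (α := α) (· ≤ ·)] (τ : ℕ → α) (N : ℕ) (x : α) :
    Fin (N + 1) :=
  ⟨#{j ∈ range N | τ j ≤ x}, Nat.lt_succ_of_le ((card_filter_le _ _).trans_eq (card_range N))⟩

lemma thresholdIndex_ne_imp [LinearOrder α] {τ : ℕ → α} {N : ℕ} (hτ : MonotoneOn τ (Set.Iio N))
    {x : α} {m : Fin (N + 1)} (h : thresholdIndex τ N x ≠ m) :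
    ((m : ℕ) ≠ 0 ∧ x < τ (m - 1)) ∨ ((m : ℕ) ≠ N ∧ τ m ≤ x) := by
  have hmN := Nat.lt_succ_iff.mp m.isLt
  rcases (Fin.val_ne_of_ne h).lt_or_gt with hlt | hgt
  · have := (lt_card_filter_le_iff hτ x (m - 1)).not.mp (by simp [thresholdIndex] at hlt ⊢; omega)
    left
    exact ⟨by omega, not_le.mp fun hx => this ⟨by omega, hx⟩⟩
  · obtain ⟨hm, hx⟩ := (lt_card_filter_le_iff hτ x m).mp hgt
    exact Or.inr ⟨hm.ne, hx⟩

end Decoder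

lemma prodProb_thresholdIndex_ne_le {N n : ℕ} {τ : ℕ → ℝ} (hτ : MonotoneOn τ (Set.Iio N))
    {p : ℝ} (hp0 : 0 ≤ p) (hp1 : p ≤ 1) (m : Fin (N + 1)) :
    prodProb ![1 - p, p] n {y | thresholdIndex τ N (numOnes y : ℝ) ≠ m} ≤
      min 1 ((if (m : ℕ) = 0 then 0 else
          ∑ t ∈ range (⌊τ (m - 1)⌋₊ + 1), (n.choose t : ℝ) * p ^ t * (1 - p) ^ (n - t)) +
        (if (m : ℕ) = N then 0 else
          ∑ t ∈ Icc ⌈τ m⌉₊ n, (n.choose t : ℝ) * p ^ t * (1 - p) ^ (n - t))) := by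
  have hP := bernoulli_nonneg hp0 hp1
  have hsub : {y : Fin n → Fin 2 | thresholdIndex τ N (numOnes y : ℝ) ≠ m} ⊆
      {y | (m : ℕ) ≠ 0 ∧ y ∈ {y | numOnes y ≤ ⌊τ (m - 1)⌋₊}} ∪
        {y | (m : ℕ) ≠ N ∧ y ∈ {y | ⌈τ m⌉₊ ≤ numOnes y}} := by
    intro y hy
    rcases thresholdIndex_ne_imp hτ hy with ⟨hm, hlt⟩ | ⟨hm, hle⟩
    · exact Or.inl ⟨hm, Nat.le_floor hlt.le⟩
    · exact Or.inr ⟨hm, Nat.ceil_le.mpr hle⟩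
  refine le_min (prodProb_le_one hP (bernoulli_sum p) _) ?_
  calc _ ≤ _ := prodProb_mono hP hsub
    _ ≤ _ := prodProb_union_le hP _ _
    _ = _ := by
      rw [prodProb_setOf_and, prodProb_setOf_and, prodProb_bernoulli_numOnes_le,
        prodProb_bernoulli_le_numOnes, ite_not, ite_not]

section Grid

variable {d : ℕ → ℝ} {N : ℕ}

lemma llrThreshold_mem_Icc_of_strictMonoOn (hd : StrictMonoOn d (Set.Iic N)) (hd0 : 0 < d 0)
    (hdN : d N < 1) {j : ℕ} (hj : j < N) :
    llrThreshold (d j) (d (j + 1)) ∈ Set.Icc (d j) (d (j + 1)) :=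
  llrThreshold_mem_Icc (hd0.trans_le (hd.monotoneOn (by simp) (by simp; omega) (Nat.zero_le j)))
    (hd (by simp; omega) (by simpa using hj) (Nat.lt_succ_self j))
    ((hd.monotoneOn (by simpa using hj) (by simp) hj).trans_lt hdN)

lemma monotoneOn_llrThreshold (hd : StrictMonoOn d (Set.Iic N)) (hd0 : 0 < d 0)
    (hdN : d N < 1) : MonotoneOn (fun j => llrThreshold (d j) (d (j + 1))) (Set.Iio N) := by
  intro i hi j hj hij
  rcases hij.eq_or_lt with rfl | hlt
  · rfl
  · calc llrThreshold (d i) (d (i + 1)) ≤ d (i + 1) :=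
          (llrThreshold_mem_Icc_of_strictMonoOn hd hd0 hdN hi).2
      _ ≤ d j := hd.monotoneOn (by simp at hj ⊢; omega) (by simp at hj ⊢; omega) hlt
      _ ≤ llrThreshold (d j) (d (j + 1)) := (llrThreshold_mem_Icc_of_strictMonoOn hd hd0 hdN hj).1

theorem exists_decoder_error_le (n : ℕ) (hd : StrictMonoOn d (Set.Iic N)) (hd0 : 0 < d 0)
    (hdN : d N < 1) :
    ∃ g : (Fin n → Fin 2) → Fin (N + 1), ∀ m : Fin (N + 1),
      prodProb ![1 - d m, d m] n {y | g y ≠ m} ≤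
        min 1 ((if (m : ℕ) = 0 then 0 else
            ∑ t ∈ range (⌊n * llrThreshold (d (m - 1)) (d m)⌋₊ + 1),
              (n.choose t : ℝ) * d m ^ t * (1 - d m) ^ (n - t)) +
          (if (m : ℕ) = N then 0 else
            ∑ t ∈ Icc ⌈n * llrThreshold (d m) (d (m + 1))⌉₊ n,
              (n.choose t : ℝ) * d m ^ t * (1 - d m) ^ (n - t))) := by
  set τ : ℕ → ℝ := fun j => n * llrThreshold (d j) (d (j + 1))
  have hτ : MonotoneOn τ (Set.Iio N) := fun i hi j hj hij =>
    mul_le_mul_of_nonneg_left (monotoneOn_llrThreshold hd hd0 hdN hi hj hij) n.cast_nonneg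
  refine ⟨fun y => thresholdIndex τ N (numOnes y : ℝ), fun m => ?_⟩
  have hmN : (m : ℕ) ≤ N := Nat.lt_succ_iff.mp m.isLt
  have hdm0 : 0 ≤ d m := hd0.le.trans (hd.monotoneOn (by simp) (by simpa using hmN) (Nat.zero_le _))
  have hdm1 : d m ≤ 1 := (hd.monotoneOn (by simpa using hmN) (by simp) hmN).trans hdN.le
  convert prodProb_thresholdIndex_ne_le hτ hdm0 hdm1 m using 4
  rename_i hm0
  simp only [τ, Nat.sub_add_cancel (Nat.pos_of_ne_zero hm0)]

end Grid

theorem bsc_achievability_general (δ : ℝ) (hδ0 : 0 < δ) (hδ : δ < 1 / 2)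
    (N : ℕ) (M : ℕ) (hM : M = N + 1)
    (d : ℕ → ℝ) (hd : ∀ m, d m = δ + (1 - 2 * δ) * (m : ℝ) / N)
    (n : ℕ)
    (A B : ℕ → ℝ)
    (hA : ∀ m, A m = if m = 0 then 0 else
        ∑ t ∈ Finset.range
            (⌊(n * Real.logb 2 ((1 - d (m - 1)) / (1 - d m)))
              / Real.logb 2 (d m * (1 - d (m - 1)) / (d (m - 1) * (1 - d m)))⌋₊ + 1),
          (n.choose t : ℝ) * (d m) ^ t * (1 - d m) ^ (n - t))
    (hB : ∀ m, B m = if m = M - 1 then 0 else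
        ∑ t ∈ Finset.Icc
            (⌈(n * Real.logb 2 ((1 - d (m + 1)) / (1 - d m)))
              / Real.logb 2 (d m * (1 - d (m + 1)) / (d (m + 1) * (1 - d m)))⌉₊) n,
          (n.choose t : ℝ) * (d m) ^ t * (1 - d m) ^ (n - t)) :
    ∃ g : (Fin n → Fin 2) → Fin M,
      (1 / (M : ℝ)) * ∑ m : Fin M, prodProb ![1 - d (m : ℕ), d (m : ℕ)] n {y | g y ≠ m}
        ≤ (1 / (M : ℝ)) * ∑ m : Fin M, min 1 (A (m : ℕ) + B (m : ℕ)) := by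
  subst hM
  have hd_mono : StrictMonoOn d (Set.Iic N) := by
    intro i _ j hj hij
    have hN : (0 : ℝ) < N := Nat.cast_pos.mpr ((Nat.zero_le i).trans_lt (hij.trans_le hj))
    rw [hd, hd]
    gcongr
    linarith
  have hd0 : 0 < d 0 := by simpa [hd] using hδ0
  have hdN : d N < 1 := by
    rw [hd]
    rcases N.eq_zero_or_pos with rfl | hN
    · simp only [CharP.cast_eq_zero, div_zero, add_zero]
      linarith
    · rw [mul_div_cancel_right₀ _ (by positivity)]
      linarith
  obtain ⟨g, hg⟩ := exists_decoder_error_le n hd_mono hd0 hdN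
  refine ⟨g, mul_le_mul_of_nonneg_left (sum_le_sum fun m _ => (hg m).trans_eq ?_) (by positivity)⟩
  rw [llrThreshold_comm (d (m + 1)) (d m)]
  simp only [hA, hB, llrThreshold, mul_div_assoc, Nat.add_sub_cancel]

/-- achievability bound for the BSC permutation channel with crossover
probability `δ`.  Messages are indexed by `m ∈ {0,…,N}` (so `M = N + 1` of them), the
`m`-th marginal is `Bern(δ_m)` with `δ_m = δ + (1−2δ)·m/N`, and there is a decoder
whose average error probability is at most the average of `min{1, A_m + B_m}`, where
`A_m`, `B_m` are the binomial lower/upper tails at the likelihood-ratio thresholds. -/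
theorem bsc_achievability (δ : ℝ) (hδ0 : 0 < δ) (hδ : δ < 1 / 2)
    (r₀ : ℝ) (hr₀ : 0 < r₀)
    (r : ℝ) (hr : r = (1 / (1 - 2 * δ)) * Real.sqrt (r₀ / (2 * Real.logb 2 (Real.exp 1))))
    (hr1 : r ≤ 1)
    (N : ℕ) (hN : N = ⌊1 / r⌋₊) (M : ℕ) (hM : M = N + 1)
    (d : ℕ → ℝ) (hd : ∀ m, d m = δ + (1 - 2 * δ) * (m : ℝ) / N)
    (n : ℕ) (hn : 1 ≤ n)
    (A B : ℕ → ℝ)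
    (hA : ∀ m, A m = if m = 0 then 0 else
        ∑ t ∈ Finset.range
            (⌊(n * Real.logb 2 ((1 - d (m - 1)) / (1 - d m)))
              / Real.logb 2 (d m * (1 - d (m - 1)) / (d (m - 1) * (1 - d m)))⌋₊ + 1),
          (n.choose t : ℝ) * (d m) ^ t * (1 - d m) ^ (n - t))
    (hB : ∀ m, B m = if m = M - 1 then 0 else
        ∑ t ∈ Finset.Icc
            (⌈(n * Real.logb 2 ((1 - d (m + 1)) / (1 - d m)))
              / Real.logb 2 (d m * (1 - d (m + 1)) / (d (m + 1) * (1 - d m)))⌉₊) n,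
          (n.choose t : ℝ) * (d m) ^ t * (1 - d m) ^ (n - t)) :
    ∃ g : (Fin n → Fin 2) → Fin M,
      (1 / (M : ℝ)) * ∑ m : Fin M, prodProb ![1 - d (m : ℕ), d (m : ℕ)] n {y | g y ≠ m}
        ≤ (1 / (M : ℝ)) * ∑ m : Fin M, min 1 (A (m : ℕ) + B (m : ℕ)) :=
  bsc_achievability_general δ hδ0 hδ N M hM d hd n A B hA hB
end
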